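/- arXiv:1312.5152 — 3 statements merged into one kernel-verified Lean document; each statement's English description precedes it below -/
import Mathlib

section
/- Let n ≥ 3 and 1 ≤ l < k ≤ n−1 be integers, and let λ ∈ ℝ^{n−1} satisfy σ_j(λ) ≥ 0 for all 1 ≤ j ≤ k. Then H_l(λ) ≥ H_k(λ)^{l/k} (note H_k(λ) ≥ 0, so the real power is well defined). Moreover, if in addition σ_j(λ) > 0 for all 1 ≤ j ≤ k and H_l(λ) = H_k(λ)^{l/k}, then λ = c·(1, …, 1) for some c > 0. -/
/-- The `k`-th elementary symmetric polynomial of `x ∈ ℝ^m`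
(`σ_0 = 1`, `σ_k = 0` for `k > m`). -/
noncomputable def esymmR (m : ℕ) (x : Fin m → ℝ) (k : ℕ) : ℝ :=
  ∑ s ∈ Finset.powersetCard k (Finset.univ : Finset (Fin m)), ∏ i ∈ s, x i

/-- The normalized `k`-th elementary symmetric function `H_k = σ_k / C(m,k)`
(`H_0 = 1`, `H_k = 0` for `k > m`). -/
noncomputable def Hnorm (m : ℕ) (x : Fin m → ℝ) (k : ℕ) : ℝ :=
  esymmR m x k / (m.choose k : ℝ)

/-- The point of `ℝ^{m-1}` obtained from `x ∈ ℝ^m` by deleting the `p`-th coordinate. -/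
def deleteCoord {m : ℕ} (x : Fin m → ℝ) (p : Fin m) : Fin (m - 1) → ℝ :=
  fun i => if (i : ℕ) < (p : ℕ) then x ⟨(i : ℕ), by have := i.isLt; omega⟩
           else x ⟨(i : ℕ) + 1, by have := i.isLt; omega⟩

/-!
The polynomial `∏ᵢ (X + xᵢ) = ∑ₛ C(m, s) Hₛ X^(m-s)` has only real roots. Differentiation
(by Rolle) and reversal preserve real-rootedness, and `m - j - 2` derivatives, a reversal and
`j` more derivatives cut it down to a real-rooted quadratic whose coefficients are proportional
to `H_{j+2}, 2 H_{j+1}, H_j`; its discriminant gives Newton's inequality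
`H_j H_{j+2} ≤ H_{j+1}²`. When `σ₁, …, σ_k > 0` this says that `j ↦ log H_j` is concave on
`[0, k]`, and it vanishes at `0`, so `log H_j / j` is nonincreasing there: this is Maclaurin's
inequality. Equality at `l < k` forces the sequence to be linear on `[0, k]`, so `H₂ = H₁²`; and
`H₁² - H₂` is a positive multiple of the variance of the `xᵢ`. The case `σ_j ≥ 0` follows by
continuity from `x + ε`, all of whose `σ₁, …, σ_k` are positive for `ε > 0`.
-/

open Polynomial Finset
open scoped Nat

namespace Polynomial

theorem Splits.derivative {p : ℝ[X]} (hp : p.Splits) : (Polynomial.derivative p).Splits := by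
  rw [splits_iff_card_roots] at hp ⊢
  have h₁ := card_roots_le_derivative p
  have h₂ := natDegree_derivative_le p
  have h₃ := (Polynomial.derivative p).card_roots'
  omega

theorem Splits.iterate_derivative {p : ℝ[X]} (hp : p.Splits) (n : ℕ) :
    (Polynomial.derivative^[n] p).Splits := by
  induction n with
  | zero => exact hp
  | succ n ih => rw [Function.iterate_succ_apply']; exact ih.derivative

theorem Splits.reverse {K : Type*} [Field K] {p : K[X]} (hp : p.Splits) : p.reverse.Splits := by
  induction hp using Submonoid.closure_induction with
  | mem f hf =>
    rcases hf with ⟨a, rfl⟩ | ⟨a, rfl⟩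
    · simp
    · exact .of_natDegree_le_one ((reverse_natDegree_le _).trans (natDegree_X_add_C a).le)
  | one => rw [← C_1, reverse_C]; exact Splits.C 1
  | mul f g _ _ hf hg => rw [reverse_mul_of_domain]; exact hf.mul hg

theorem Splits.four_mul_coeff_two_mul_coeff_zero_le {K : Type*} [Field K] [LinearOrder K]
    [IsStrictOrderedRing K] {q : K[X]} (hq : q.Splits) (hdeg : q.natDegree ≤ 2) :
    4 * q.coeff 2 * q.coeff 0 ≤ q.coeff 1 ^ 2 := by
  by_cases h₂ : q.coeff 2 = 0
  · rw [h₂]; simpa using sq_nonneg (q.coeff 1)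
  have hdeg₂ : q.degree = 2 := by
    rw [degree_eq_natDegree (fun h => h₂ (by simp [h])),
      natDegree_eq_of_le_of_coeff_ne_zero hdeg h₂]
    rfl
  obtain ⟨r, hr⟩ := hq.exists_eval_eq_zero (by rw [hdeg₂]; decide)
  rw [eval_eq_sum_range' (n := 3) (by omega)] at hr
  simp only [sum_range_succ, sum_range_zero] at hr
  have := discrim_eq_sq_of_quadratic_eq_zero (a := q.coeff 2) (b := q.coeff 1) (c := q.coeff 0)
    (x := r) (by linear_combination hr)
  rw [discrim] at this
  nlinarith [sq_nonneg (2 * q.coeff 2 * r + q.coeff 1)]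

end Polynomial

section ConcaveSequence

theorem natCast_mul_sum_range_sub_eq_sum (d : ℕ → ℝ) {l k : ℕ} (hlk : l ≤ k) :
    k * ∑ i ∈ range l, d i - l * ∑ i ∈ range k, d i
      = ∑ i ∈ range l, ∑ j ∈ Ico l k, (d i - d j) := by
  simp only [sum_sub_distrib, sum_const, Nat.card_Ico, card_range, nsmul_eq_mul, ← mul_sum]
  rw [← sum_range_add_sum_Ico d hlk, Nat.cast_sub hlk]
  ring

variable {a : ℕ → ℝ} {k : ℕ}

theorem sub_le_sub_of_concave (hconc : ∀ j, j + 2 ≤ k → a j + a (j + 2) ≤ 2 * a (j + 1))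
    {i j : ℕ} (hij : i ≤ j) (hjk : j < k) : a (j + 1) - a j ≤ a (i + 1) - a i := by
  have hanti : AntitoneOn (fun i => a (i + 1) - a i) (Set.Iio k) := by
    refine antitoneOn_of_succ_le Set.ordConnected_Iio fun i _ _ hi => ?_
    have := hconc i (by simp only [Order.succ_eq_add_one, Set.mem_Iio] at hi; omega)
    simp only [Order.succ_eq_add_one]
    linarith
  exact hanti (hij.trans_lt hjk) hjk hij

theorem sub_sub_sub_nonneg_of_concave
    (hconc : ∀ j, j + 2 ≤ k → a j + a (j + 2) ≤ 2 * a (j + 1)) {l i j : ℕ} (hi : i ∈ range l)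
    (hj : j ∈ Ico l k) : 0 ≤ (a (i + 1) - a i) - (a (j + 1) - a j) := by
  simp only [mem_range, mem_Ico] at hi hj
  exact sub_nonneg.2 (sub_le_sub_of_concave hconc (by omega) (by omega))

theorem natCast_mul_sub_natCast_mul_eq_sum (ha₀ : a 0 = 0) {l : ℕ} (hlk : l ≤ k) :
    k * a l - l * a k
      = ∑ i ∈ range l, ∑ j ∈ Ico l k, ((a (i + 1) - a i) - (a (j + 1) - a j)) := by
  rw [← natCast_mul_sum_range_sub_eq_sum (fun i => a (i + 1) - a i) hlk, sum_range_sub,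
    sum_range_sub, ha₀, sub_zero, sub_zero]

theorem natCast_mul_le_of_concave (ha₀ : a 0 = 0)
    (hconc : ∀ j, j + 2 ≤ k → a j + a (j + 2) ≤ 2 * a (j + 1)) {l : ℕ} (hlk : l ≤ k) :
    l * a k ≤ k * a l := by
  rw [← sub_nonneg, natCast_mul_sub_natCast_mul_eq_sum ha₀ hlk]
  exact sum_nonneg fun i hi => sum_nonneg fun j hj => sub_sub_sub_nonneg_of_concave hconc hi hj

theorem two_mul_eq_of_concave_of_natCast_mul_eq (ha₀ : a 0 = 0)
    (hconc : ∀ j, j + 2 ≤ k → a j + a (j + 2) ≤ 2 * a (j + 1)) {l : ℕ} (hl : 0 < l)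
    (hlk : l < k) (heq : l * a k = k * a l) : a 2 = 2 * a 1 := by
  have hterm := fun i (hi : i ∈ range l) j (hj : j ∈ Ico l k) =>
    sub_sub_sub_nonneg_of_concave hconc hi hj
  have hsum := natCast_mul_sub_natCast_mul_eq_sum ha₀ hlk.le
  rw [heq, sub_self, eq_comm,
    sum_eq_zero_iff_of_nonneg fun i hi => sum_nonneg (hterm i hi)] at hsum
  have h₀ := (sum_eq_zero_iff_of_nonneg (hterm 0 (by simpa))).1 (hsum 0 (by simpa)) l (by simpa)
  have h₁ := sub_le_sub_of_concave hconc (i := 0) (j := 1) zero_le_one (by omega)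
  have h₂ := sub_le_sub_of_concave hconc (i := 1) (j := l) hl hlk
  linarith

end ConcaveSequence

section

variable {m : ℕ} (x : Fin m → ℝ)

theorem esymmR_zero : esymmR m x 0 = 1 := by
  simp [esymmR]

theorem Hnorm_zero : Hnorm m x 0 = 1 := by
  simp [Hnorm, esymmR_zero]

noncomputable def prodXAddC : ℝ[X] := ∏ i, (X + C (x i))

theorem natDegree_prodXAddC : (prodXAddC x).natDegree = m := by
  rw [prodXAddC, natDegree_prod_of_monic _ _ fun i _ => monic_X_add_C (x i)]
  simp

theorem coeff_prodXAddC {s : ℕ} (hs : s ≤ m) : (prodXAddC x).coeff (m - s) = esymmR m x s := by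
  rw [prodXAddC, prod_X_add_C_coeff _ _ (by simp), esymmR]
  simp [Nat.sub_sub_self hs]

theorem splits_prodXAddC : (prodXAddC x).Splits :=
  Splits.prod fun i _ => Splits.X_add_C (x i)

theorem factorial_mul_Hnorm {s : ℕ} (hs : s ≤ m) :
    (m ! : ℝ) * Hnorm m x s = s ! * (m - s)! * esymmR m x s := by
  have h := Nat.choose_mul_factorial_mul_factorial hs
  have : (m.choose s : ℝ) ≠ 0 := by exact_mod_cast (Nat.choose_pos hs).ne'
  rw [Hnorm, ← h]
  push_cast
  field_simp

noncomputable def newtonQuadratic (j : ℕ) : ℝ[X] :=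
  derivative^[j] (derivative^[m - j - 2] (prodXAddC x)).reverse

theorem splits_newtonQuadratic (j : ℕ) : (newtonQuadratic x j).Splits :=
  (((splits_prodXAddC x).iterate_derivative _).reverse).iterate_derivative _

theorem natDegree_newtonQuadratic_le (j : ℕ) : (newtonQuadratic x j).natDegree ≤ 2 := by
  have h₁ := natDegree_iterate_derivative (derivative^[m - j - 2] (prodXAddC x)).reverse j
  have h₂ := reverse_natDegree_le (derivative^[m - j - 2] (prodXAddC x))
  have h₃ := natDegree_iterate_derivative (prodXAddC x) (m - j - 2)
  rw [natDegree_prodXAddC] at h₃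
  rw [newtonQuadratic]
  omega

theorem coeff_newtonQuadratic {j : ℕ} (hjm : j + 2 ≤ m) {i : ℕ} (hi : i ≤ 2) :
    (i ! * (2 - i)! : ℝ) * (newtonQuadratic x j).coeff i = m ! * Hnorm m x (j + i) := by
  set q := derivative^[m - j - 2] (prodXAddC x)
  have hq : ∀ t ≤ j + 2,
      q.coeff t = (t + (m - j - 2)).descFactorial (m - j - 2) * esymmR m x (j + 2 - t) := by
    intro t ht
    rw [coeff_iterate_derivative, nsmul_eq_mul, show t + (m - j - 2) = m - (j + 2 - t) by omega,
      coeff_prodXAddC x (by omega)]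
  have hq_deg : q.natDegree = j + 2 := by
    refine natDegree_eq_of_le_of_coeff_ne_zero ?_ ?_
    · have : q.natDegree ≤ (prodXAddC x).natDegree - (m - j - 2) :=
        natDegree_iterate_derivative _ _
      rw [natDegree_prodXAddC] at this
      omega
    · rw [hq _ le_rfl, Nat.sub_self, esymmR_zero, mul_one, Nat.cast_ne_zero,
        Ne, Nat.descFactorial_eq_zero_iff_lt]
      omega
  have e₁ : (i ! * (i + j).descFactorial j : ℝ) = (j + i)! := by
    rw [add_comm j i]
    exact_mod_cast (Nat.add_sub_cancel i j) ▸ Nat.factorial_mul_descFactorial (Nat.le_add_left j i)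
  have e₂ : ((2 - i)! * (2 - i + (m - j - 2)).descFactorial (m - j - 2) : ℝ) = (m - (j + i))! := by
    rw [show m - (j + i) = 2 - i + (m - j - 2) by omega]
    exact_mod_cast (Nat.add_sub_cancel (2 - i) (m - j - 2)) ▸
      Nat.factorial_mul_descFactorial (Nat.le_add_left (m - j - 2) (2 - i))
  rw [newtonQuadratic, coeff_iterate_derivative, nsmul_eq_mul, coeff_reverse, hq_deg,
    revAt_le (by omega), hq _ (by omega), show j + 2 - (i + j) = 2 - i by omega,
    show j + 2 - (2 - i) = j + i by omega, factorial_mul_Hnorm x (by omega), ← e₁, ← e₂]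
  ring

theorem Hnorm_mul_Hnorm_add_two_le_sq {j : ℕ} (hjm : j + 2 ≤ m) :
    Hnorm m x j * Hnorm m x (j + 2) ≤ Hnorm m x (j + 1) ^ 2 := by
  have hdisc := (splits_newtonQuadratic x j).four_mul_coeff_two_mul_coeff_zero_le
    (natDegree_newtonQuadratic_le x j)
  have c₀ := coeff_newtonQuadratic x hjm (i := 0) (by norm_num)
  have c₁ := coeff_newtonQuadratic x hjm (i := 1) (by norm_num)
  have c₂ := coeff_newtonQuadratic x hjm (i := 2) (by norm_num)
  norm_num at c₀ c₁ c₂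
  have key :
      (m ! * Hnorm m x j) * (m ! * Hnorm m x (j + 2)) ≤ (m ! * Hnorm m x (j + 1)) ^ 2 := by
    rw [← c₀, ← c₁, ← c₂]
    linarith
  refine le_of_mul_le_mul_left ?_ (by positivity : (0 : ℝ) < (m ! : ℝ) ^ 2)
  linarith

theorem Hnorm_pos {k : ℕ} (hkm : k ≤ m) (hσ : ∀ j, 1 ≤ j → j ≤ k → 0 < esymmR m x j) :
    ∀ j ≤ k, 0 < Hnorm m x j := by
  intro j hj
  rcases Nat.eq_zero_or_pos j with rfl | hj₀
  · simp [Hnorm_zero]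
  · exact div_pos (hσ j hj₀ hj) (by exact_mod_cast Nat.choose_pos (hj.trans hkm))

theorem two_mul_esymmR_two : 2 * esymmR m x 2 = (∑ i, x i) ^ 2 - ∑ i, x i ^ 2 := by
  have eval_esymm (k : ℕ) :
      MvPolynomial.eval x (MvPolynomial.esymm (Fin m) ℝ k) = esymmR m x k := by
    simp [MvPolynomial.esymm, esymmR]
  have h := congrArg (MvPolynomial.eval x) (MvPolynomial.mul_esymm_eq_sum (Fin m) ℝ 2)
  simp only [sum_filter, Nat.sum_antidiagonal_eq_sum_range_succ_mk, sum_range_succ,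
    sum_range_zero] at h
  simp [MvPolynomial.psum, eval_esymm] at h
  linear_combination h

theorem sq_Hnorm_one_sub_Hnorm_two (hm : 2 ≤ m) :
    Hnorm m x 1 ^ 2 - Hnorm m x 2 = (∑ i, (x i - Hnorm m x 1) ^ 2) / (m * (m - 1)) := by
  have hσ₁ : esymmR m x 1 = ∑ i, x i := by simp [esymmR, powersetCard_one]
  have hσ₂ := two_mul_esymmR_two x
  have hm₀ : (m : ℝ) ≠ 0 := by positivity
  have hm₁ : (m : ℝ) - 1 ≠ 0 := by
    have : (2 : ℝ) ≤ m := by exact_mod_cast hm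
    linarith
  simp only [sub_sq, sum_add_distrib, sum_sub_distrib, ← sum_mul, ← mul_sum, sum_const,
    card_univ, Fintype.card_fin, nsmul_eq_mul]
  rw [Hnorm, Hnorm, hσ₁, Nat.choose_one_right, Nat.cast_choose_two]
  field_simp
  linear_combination (-(m : ℝ)) * hσ₂

theorem eq_const_of_Hnorm_two_eq_sq (hm : 2 ≤ m) (h : Hnorm m x 2 = Hnorm m x 1 ^ 2) :
    x = fun _ => Hnorm m x 1 := by
  have hvar := sq_Hnorm_one_sub_Hnorm_two x hm
  have hm₁ : (1 : ℝ) < m := by exact_mod_cast hm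
  rw [h, sub_self, eq_comm, div_eq_zero_iff,
    sum_eq_zero_iff_of_nonneg fun i _ => sq_nonneg _] at hvar
  rcases hvar with hvar | hvar
  · funext i
    exact sub_eq_zero.1 (pow_eq_zero_iff two_ne_zero |>.1 (hvar i (mem_univ i)))
  · nlinarith

theorem prodXAddC_add_const (ε : ℝ) :
    prodXAddC (fun i => x i + ε) = taylor ε (prodXAddC x) := by
  rw [taylor_apply, prodXAddC, prodXAddC, Polynomial.prod_comp]
  refine prod_congr rfl fun i _ => ?_
  rw [add_comp, X_comp, C_comp, C_add]
  ring

theorem esymmR_add_const_pos {K : ℕ} (hKm : K ≤ m) (hσ : ∀ j, 1 ≤ j → j ≤ K → 0 ≤ esymmR m x j)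
    {ε : ℝ} (hε : 0 < ε) {j : ℕ} (hjK : j ≤ K) : 0 < esymmR m (fun i => x i + ε) j := by
  have hσ₀ : ∀ s ≤ K, 0 ≤ esymmR m x s := fun s hs => by
    rcases Nat.eq_zero_or_pos s with rfl | hs₀
    · rw [esymmR_zero]; exact zero_le_one
    · exact hσ s hs₀ hs
  -- `σ_j(x + ε) = ∑ₜ C(m - j + t, t) σ_{j-t}(x) εᵗ`, read off from the Taylor expansion of
  -- `∏ᵢ (X + xᵢ)` at `ε`.
  set p := hasseDeriv (m - j) (prodXAddC x)
  have hcoeff : ∀ t ≤ j, p.coeff t = ((t + (m - j)).choose (m - j)) * esymmR m x (j - t) := by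
    intro t ht
    rw [hasseDeriv_coeff, show t + (m - j) = m - (j - t) by omega, coeff_prodXAddC x (by omega)]
  have hdeg : p.natDegree < j + 1 := by
    rw [natDegree_hasseDeriv, natDegree_prodXAddC]
    omega
  rw [← coeff_prodXAddC _ (hjK.trans hKm), prodXAddC_add_const, taylor_coeff,
    eval_eq_sum_range' hdeg]
  refine sum_pos' (fun t ht => ?_) ⟨j, self_mem_range_succ j, ?_⟩
  · rw [mem_range] at ht
    rw [hcoeff t (by omega)]
    have := hσ₀ (j - t) (by omega)
    positivity
  · rw [hcoeff j le_rfl, Nat.sub_self, esymmR_zero, mul_one]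
    have := Nat.choose_pos (Nat.le_add_left (m - j) j)
    positivity

theorem continuous_Hnorm_add_const (j : ℕ) :
    Continuous fun ε : ℝ => Hnorm m (fun i => x i + ε) j := by
  unfold Hnorm esymmR
  fun_prop

theorem log_Hnorm_concave {k : ℕ} (hkm : k ≤ m) (hσ : ∀ j, 1 ≤ j → j ≤ k → 0 < esymmR m x j)
    (j : ℕ) (hj : j + 2 ≤ k) :
    Real.log (Hnorm m x j) + Real.log (Hnorm m x (j + 2)) ≤ 2 * Real.log (Hnorm m x (j + 1)) := by
  have hpos := Hnorm_pos x hkm hσ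
  rw [← Real.log_mul (hpos _ (by omega)).ne' (hpos _ hj).ne',
    show (2 : ℝ) * Real.log (Hnorm m x (j + 1)) = Real.log (Hnorm m x (j + 1) ^ 2) by
      rw [Real.log_pow, Nat.cast_two]]
  exact Real.log_le_log (mul_pos (hpos _ (by omega)) (hpos _ hj))
    (Hnorm_mul_Hnorm_add_two_le_sq x (by omega))

theorem Hnorm_rpow_le_of_pos {l k : ℕ} (hkm : k ≤ m) (hlk : l < k)
    (hσ : ∀ j, 1 ≤ j → j ≤ k → 0 < esymmR m x j) :
    Hnorm m x k ^ ((l : ℝ) / k) ≤ Hnorm m x l := by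
  have hpos := Hnorm_pos x hkm hσ
  have hk : (0 : ℝ) < k := by exact_mod_cast (Nat.zero_le l).trans_lt hlk
  have hlog := natCast_mul_le_of_concave (a := fun j => Real.log (Hnorm m x j))
    (by simp [Hnorm_zero]) (log_Hnorm_concave x hkm hσ) hlk.le
  rw [← Real.log_le_log_iff (Real.rpow_pos_of_pos (hpos _ le_rfl) _) (hpos _ hlk.le),
    Real.log_rpow (hpos _ le_rfl), div_mul_eq_mul_div, div_le_iff₀ hk]
  linarith

theorem Hnorm_rpow_le {l k : ℕ} (hkm : k ≤ m) (hlk : l < k)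
    (hσ : ∀ j, 1 ≤ j → j ≤ k → 0 ≤ esymmR m x j) :
    Hnorm m x k ^ ((l : ℝ) / k) ≤ Hnorm m x l := by
  set S := {ε : ℝ | Hnorm m (fun i => x i + ε) k ^ ((l : ℝ) / k) ≤ Hnorm m (fun i => x i + ε) l}
  have hS_closed : IsClosed S :=
    isClosed_le ((continuous_Hnorm_add_const x k).rpow_const fun _ => Or.inr (by positivity))
      (continuous_Hnorm_add_const x l)
  have hIoi_subset : Set.Ioi 0 ⊆ S := fun ε hε =>
    Hnorm_rpow_le_of_pos _ hkm hlk fun j _ hj => esymmR_add_const_pos x hkm hσ hε hj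
  have h₀ : (0 : ℝ) ∈ S :=
    hS_closed.closure_subset_iff.2 hIoi_subset (by rw [closure_Ioi]; exact Set.self_mem_Ici)
  simpa [S] using h₀

theorem eq_const_of_natCast_mul_log_Hnorm_eq {l k : ℕ} (hkm : k ≤ m) (hl : 0 < l) (hlk : l < k)
    (hσ : ∀ j, 1 ≤ j → j ≤ k → 0 < esymmR m x j)
    (heq : l * Real.log (Hnorm m x k) = k * Real.log (Hnorm m x l)) :
    x = fun _ => Hnorm m x 1 := by
  have hpos := Hnorm_pos x hkm hσ
  have hlog := two_mul_eq_of_concave_of_natCast_mul_eq (a := fun j => Real.log (Hnorm m x j))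
    (by simp [Hnorm_zero]) (log_Hnorm_concave x hkm hσ) hl hlk heq
  refine eq_const_of_Hnorm_two_eq_sq x (by omega) ?_
  rw [← Real.exp_log (hpos 2 (by omega)), ← Real.exp_log (pow_pos (hpos 1 (by omega)) 2),
    Real.log_pow]
  simpa using hlog

end

theorem stmt_1_general (n : ℕ) (l k : ℕ) (hl : 1 ≤ l) (hlk : l < k) (hk : k ≤ n - 1)
    (lam : Fin (n - 1) → ℝ)
    (hσ : ∀ j : ℕ, 1 ≤ j → j ≤ k → 0 ≤ esymmR (n - 1) lam j) :
    Hnorm (n - 1) lam k ^ ((l : ℝ) / (k : ℝ)) ≤ Hnorm (n - 1) lam l ∧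
    ((∀ j : ℕ, 1 ≤ j → j ≤ k → 0 < esymmR (n - 1) lam j) →
      Hnorm (n - 1) lam l = Hnorm (n - 1) lam k ^ ((l : ℝ) / (k : ℝ)) →
      ∃ c : ℝ, 0 < c ∧ lam = fun _ => c) := by
  refine ⟨Hnorm_rpow_le lam hk hlk hσ, fun hσ_pos heq => ?_⟩
  have hpos := Hnorm_pos lam hk hσ_pos
  refine ⟨_, hpos _ (by omega), eq_const_of_natCast_mul_log_Hnorm_eq lam hk hl hlk hσ_pos ?_⟩
  have hk₀ : (k : ℝ) ≠ 0 := Nat.cast_ne_zero.2 (by omega)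
  have := congrArg Real.log heq
  rw [Real.log_rpow (hpos _ le_rfl)] at this
  field_simp at this
  linarith

/-- **Maclaurin inequality.** If `σ_j(λ) ≥ 0` for `1 ≤ j ≤ k`, then `H_l ≥ H_k^{l/k}`,
with equality (under strict positivity of the `σ_j`'s) iff `λ = c(1,…,1)`, `c > 0`. -/
theorem stmt_1 (n : ℕ) (hn : 3 ≤ n) (l k : ℕ) (hl : 1 ≤ l) (hlk : l < k) (hk : k ≤ n - 1)
    (lam : Fin (n - 1) → ℝ)
    (hσ : ∀ j : ℕ, 1 ≤ j → j ≤ k → 0 ≤ esymmR (n - 1) lam j) :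
    Hnorm (n - 1) lam k ^ ((l : ℝ) / (k : ℝ)) ≤ Hnorm (n - 1) lam l ∧
    ((∀ j : ℕ, 1 ≤ j → j ≤ k → 0 < esymmR (n - 1) lam j) →
      Hnorm (n - 1) lam l = Hnorm (n - 1) lam k ^ ((l : ℝ) / (k : ℝ)) →
      ∃ c : ℝ, 0 < c ∧ lam = fun _ => c) :=
  stmt_1_general n l k hl hlk hk lam hσ
end

section
/- Let n ≥ 3 and 1 ≤ i < j ≤ k ≤ n−1 be integers, and let λ ∈ ℝ^{n−1} satisfy σ_m(λ) > 0 for all 1 ≤ m ≤ k. Then for every p ∈ {1, …, n−1}, (j−1)·H_{j−2}(Λ_p)·H_i(λ) > (i−1)·H_j(λ)·H_{i−2}(Λ_p). -/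
open Polynomial

namespace Multiset

variable {R : Type*} [CommSemiring R]

theorem esymm_cons_succ (a : R) (s : Multiset R) (k : ℕ) :
    (a ::ₘ s).esymm (k + 1) = s.esymm (k + 1) + a * s.esymm k := by
  simp only [esymm, powersetCard_cons, map_add, sum_add, map_map, Function.comp_def, prod_cons,
    sum_map_mul_left]

theorem esymm_zero (s : Multiset R) : s.esymm 0 = 1 := by
  simp [esymm]

theorem esymm_eq_zero_of_card_lt (s : Multiset R) {k : ℕ} (hk : card s < k) : s.esymm k = 0 := by
  simp [esymm, powersetCard_eq_empty _ hk]

theorem esymm_card (s : Multiset R) : s.esymm (card s) = s.prod := by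
  induction s using Multiset.induction with
  | empty => simp [esymm]
  | cons a s ih =>
    rw [card_cons, esymm_cons_succ, esymm_eq_zero_of_card_lt s (Nat.lt_succ_self _), ih, prod_cons,
      zero_add]

theorem esymm_map_inv_mul_prod {K : Type*} [Field K] (s : Multiset K) (hs : (0 : K) ∉ s) {k : ℕ}
    (hk : k ≤ card s) : (s.map (·⁻¹)).esymm k * s.prod = s.esymm (card s - k) := by
  induction s using Multiset.induction generalizing k with
  | empty => simp_all [esymm]
  | cons a s ih =>
    have ha : a ≠ 0 := fun h => hs (h ▸ mem_cons_self a s)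
    have hs' : (0 : K) ∉ s := fun h => hs (mem_cons_of_mem h)
    rcases k with _ | k
    · rw [Nat.sub_zero, esymm_card, esymm_zero, one_mul]
    rw [card_cons] at hk ⊢
    rw [map_cons, esymm_cons_succ, prod_cons, Nat.add_sub_add_right]
    have hlow : (s.map (·⁻¹)).esymm k * s.prod = s.esymm (card s - k) := ih hs' (by omega)
    rcases (show k ≤ card s by omega).lt_or_eq with hlt | rfl
    · have hup : (s.map (·⁻¹)).esymm (k + 1) * s.prod = s.esymm (card s - (k + 1)) := ih hs' hlt
      rw [show card s - k = card s - (k + 1) + 1 by omega] at hlow ⊢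
      rw [esymm_cons_succ, ← hup, ← hlow]
      field_simp
      ring
    · rw [esymm_eq_zero_of_card_lt _ (by simp), Nat.sub_self, esymm_zero]
      rw [Nat.sub_self, esymm_zero] at hlow
      rw [zero_add, ← hlow]
      field_simp

noncomputable def esymmMean (s : Multiset ℝ) (k : ℕ) : ℝ :=
  s.esymm k / (card s).choose k

theorem esymmMean_zero (s : Multiset ℝ) : s.esymmMean 0 = 1 := by
  simp [esymmMean, esymm_zero]

theorem esymmMean_eq_zero_of_card_lt (s : Multiset ℝ) {k : ℕ} (hk : card s < k) :
    s.esymmMean k = 0 := by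
  simp [esymmMean, esymm_eq_zero_of_card_lt s hk]

theorem esymmMean_mul_choose (s : Multiset ℝ) (k : ℕ) :
    s.esymmMean k * (card s).choose k = s.esymm k := by
  rcases le_or_gt k (card s) with hk | hk
  · exact div_mul_cancel₀ _ (by exact_mod_cast (Nat.choose_pos hk).ne')
  · simp [esymmMean, esymm_eq_zero_of_card_lt s hk]

theorem esymmMean_cons_succ (t : ℝ) (s : Multiset ℝ) (k : ℕ) :
    (card s + 1) * (t ::ₘ s).esymmMean (k + 1) =
      (card s - k) * s.esymmMean (k + 1) + (k + 1) * t * s.esymmMean k := by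
  rcases le_or_gt k (card s) with hk | hk
  · have hC : ((card s + 1).choose (k + 1) : ℝ) ≠ 0 := by
      exact_mod_cast (Nat.choose_pos (by omega)).ne'
    have h1 : ((card s).choose (k + 1) * (card s + 1) : ℝ) =
        (card s + 1).choose (k + 1) * (card s - k) := by
      rw [← Nat.cast_sub hk]
      exact_mod_cast (Nat.choose_mul_succ_eq (card s) (k + 1)).trans (by congr 1; omega)
    have h2 : ((card s + 1) * (card s).choose k : ℝ) = (card s + 1).choose (k + 1) * (k + 1) := by
      exact_mod_cast Nat.add_one_mul_choose_eq (card s) k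
    rw [esymmMean, card_cons, esymm_cons_succ, ← esymmMean_mul_choose s (k + 1),
      ← esymmMean_mul_choose s k, mul_div_assoc', div_eq_iff hC]
    linear_combination s.esymmMean (k + 1) * h1 + t * s.esymmMean k * h2
  · have hk' : card (t ::ₘ s) < k + 1 := by simp [hk]
    simp [esymmMean, esymm_eq_zero_of_card_lt _ hk, esymm_eq_zero_of_card_lt _ hk',
      esymm_eq_zero_of_card_lt s (hk.trans (Nat.lt_succ_self k))]

theorem exists_card_pred_card_mul_esymm_eq (s : Multiset ℝ) :
    ∃ t : Multiset ℝ, card t = card s - 1 ∧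
      ∀ k < card s, (card s : ℝ) * t.esymm k = (card s - k) * s.esymm k := by
  set c := card s
  set P : ℝ[X] := (s.map fun a => X - C a).prod
  have hPdeg : P.natDegree = c := natDegree_multiset_prod_X_sub_C_eq_card s
  have hProots : P.roots = s := roots_multiset_prod_X_sub_C s
  have hPsplit : P.Splits := splits_iff_card_roots.2 (by rw [hProots, hPdeg])
  have hPlc : P.coeff c = 1 := by
    rw [← hPdeg]
    exact (monic_multiset_prod_of_monic _ _ fun a _ => monic_X_sub_C a).coeff_natDegree
  set Q := derivative P
  have hQcoeff (k : ℕ) (hk : k < c) : Q.coeff (c - 1 - k) = P.coeff (c - k) * (c - k) := by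
    rw [coeff_derivative, show c - 1 - k + 1 = c - k by omega, Nat.cast_sub (by omega),
      Nat.cast_sub (by omega)]
    ring
  -- Rolle: `Q` has at least `c - 1` real roots and degree at most `c - 1`.
  have hrolle : c ≤ card Q.roots + 1 := by simpa [hProots] using card_roots_le_derivative P
  have hQdeg_le : Q.natDegree ≤ c - 1 := hPdeg ▸ natDegree_derivative_le P
  have hQroots : card Q.roots = c - 1 := by have := Q.card_roots'; omega
  have hQdeg : Q.natDegree = c - 1 := by have := Q.card_roots'; omega
  have hQsplit : Q.Splits := splits_iff_card_roots.2 (by rw [hQroots, hQdeg])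
  refine ⟨Q.roots, hQroots, fun k hk => ?_⟩
  have hQlc : Q.leadingCoeff = c := by
    rw [leadingCoeff, hQdeg]
    simpa [hPlc] using hQcoeff 0 (by omega)
  have hvietaP := coeff_eq_esymm_roots_of_splits hPsplit (k := c - k) (by omega)
  have hvietaQ := coeff_eq_esymm_roots_of_splits hQsplit (k := c - 1 - k) (by omega)
  rw [hPdeg, hProots, leadingCoeff, hPdeg, hPlc, show c - (c - k) = k by omega] at hvietaP
  rw [hQdeg, hQlc, show c - 1 - (c - 1 - k) = k by omega, hQcoeff k hk, hvietaP] at hvietaQ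
  apply mul_left_cancel₀ (pow_ne_zero k (by norm_num : (-1 : ℝ) ≠ 0))
  linear_combination -hvietaQ

theorem exists_card_pred_esymmMean_eq (s : Multiset ℝ) :
    ∃ t : Multiset ℝ, card t = card s - 1 ∧ ∀ k < card s, t.esymmMean k = s.esymmMean k := by
  obtain ⟨t, ht, hts⟩ := exists_card_pred_card_mul_esymm_eq s
  refine ⟨t, ht, fun k hk => ?_⟩
  set c := card s
  have hC : ((c - 1).choose k * c : ℝ) = c.choose k * (c - k) := by
    obtain ⟨d, hd⟩ : ∃ d, c = d + 1 := ⟨c - 1, by omega⟩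
    rw [hd, Nat.add_sub_cancel, ← Nat.cast_sub (by omega)]
    exact_mod_cast Nat.choose_mul_succ_eq d k
  rw [esymmMean, esymmMean, ht,
    div_eq_div_iff (by exact_mod_cast (Nat.choose_pos (by omega)).ne')
      (by exact_mod_cast (Nat.choose_pos hk.le).ne')]
  apply mul_left_cancel₀ (sub_ne_zero.2 (by exact_mod_cast hk.ne') : (c - k : ℝ) ≠ 0)
  linear_combination ((c - 1).choose k : ℝ) * hts k hk - t.esymm k * hC

theorem exists_card_eq_esymmMean_eq (s : Multiset ℝ) {m : ℕ} (hm : m ≤ card s) :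
    ∃ t : Multiset ℝ, card t = m ∧ ∀ k ≤ m, t.esymmMean k = s.esymmMean k := by
  obtain ⟨d, hd⟩ := Nat.exists_eq_add_of_le hm
  induction d generalizing s with
  | zero => exact ⟨s, hd, fun _ _ => rfl⟩
  | succ d ih =>
    obtain ⟨t, ht, hts⟩ := exists_card_pred_esymmMean_eq s
    obtain ⟨u, hu, hut⟩ := ih t (by omega) (by omega)
    exact ⟨u, hu, fun k hk => (hut k hk).trans (hts k (by omega))⟩

theorem esymmMean_map_inv_mul_prod (s : Multiset ℝ) (hs : (0 : ℝ) ∉ s) {k : ℕ}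
    (hk : k ≤ card s) : (s.map (·⁻¹)).esymmMean k * s.prod = s.esymmMean (card s - k) := by
  rw [esymmMean, esymmMean, card_map, Nat.choose_symm hk, div_mul_eq_mul_div,
    esymm_map_inv_mul_prod s hs hk]

theorem esymmMean_two_le_sq (s : Multiset ℝ) : s.esymmMean 2 ≤ s.esymmMean 1 ^ 2 := by
  rcases lt_or_ge (card s) 2 with hs | hs
  · rw [esymmMean_eq_zero_of_card_lt s hs]
    positivity
  obtain ⟨t, ht, hts⟩ := exists_card_eq_esymmMean_eq s hs
  obtain ⟨x, y, rfl⟩ := card_eq_two.1 ht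
  rw [← hts 1 (by norm_num), ← hts 2 le_rfl]
  simp only [esymmMean, insert_eq_cons, esymm_pair_one, esymm_pair_two]
  norm_num
  nlinarith [sq_nonneg (x - y)]

theorem esymmMean_mul_esymmMean_le_sq (s : Multiset ℝ) (r : ℕ) :
    s.esymmMean r * s.esymmMean (r + 2) ≤ s.esymmMean (r + 1) ^ 2 := by
  rcases lt_or_ge (card s) (r + 2) with hs | hs
  · rw [esymmMean_eq_zero_of_card_lt s hs, mul_zero]
    positivity
  obtain ⟨t, ht, hts⟩ := exists_card_eq_esymmMean_eq s hs
  rw [← hts r (by omega), ← hts (r + 1) (by omega), ← hts (r + 2) le_rfl]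
  by_cases h0 : (0 : ℝ) ∈ t
  · have htop : t.esymmMean (r + 2) = 0 := by
      rw [← ht, esymmMean, esymm_card, prod_eq_zero h0, zero_div]
    rw [htop, mul_zero]
    positivity
  -- Passing to reciprocals turns `H_r, H_{r+1}, H_{r+2}` of `t` into `H_2, H_1, H_0`.
  set u := t.map (·⁻¹)
  have hinv (k : ℕ) (hk : k ≤ 2) : t.esymmMean (r + 2 - k) = u.esymmMean k * t.prod := by
    rw [esymmMean_map_inv_mul_prod t h0 (by omega), ht]
  have hr : t.esymmMean r = u.esymmMean 2 * t.prod := hinv 2 le_rfl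
  have hr1 : t.esymmMean (r + 1) = u.esymmMean 1 * t.prod := hinv 1 (by norm_num)
  have hr2 : t.esymmMean (r + 2) = t.prod := by simpa [esymmMean_zero] using hinv 0 (by norm_num)
  rw [hr, hr1, hr2]
  calc u.esymmMean 2 * t.prod * t.prod = u.esymmMean 2 * t.prod ^ 2 := by ring
    _ ≤ u.esymmMean 1 ^ 2 * t.prod ^ 2 := by gcongr; exact esymmMean_two_le_sq u
    _ = (u.esymmMean 1 * t.prod) ^ 2 := by ring

section Cons

variable (s : Multiset ℝ) (t : ℝ)

theorem esymmMean_succ_pos_of_cons {r : ℕ} (hr : r + 1 ≤ card s) (ha : 0 < s.esymmMean r)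
    (hb₁ : 0 < (t ::ₘ s).esymmMean (r + 1)) (hb₂ : 0 < (t ::ₘ s).esymmMean (r + 2)) :
    0 < s.esymmMean (r + 1) := by
  by_contra! hx
  have e₁ := esymmMean_cons_succ t s r
  have e₂ : (card s + 1) * (t ::ₘ s).esymmMean (r + 2) =
      (card s - (r + 1)) * s.esymmMean (r + 2) + (r + 2) * t * s.esymmMean (r + 1) := by
    have := esymmMean_cons_succ t s (r + 1)
    push_cast at this
    linear_combination this
  set x := s.esymmMean (r + 1)
  have hc : (0 : ℝ) ≤ card s - (r + 1) := by
    rw [sub_nonneg]; exact_mod_cast hr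
  -- Eliminate `t` between the two recurrences.
  have key : (r + 2) * (-x) * ((card s + 1) * (t ::ₘ s).esymmMean (r + 1)) +
      (r + 1) * s.esymmMean r * ((card s + 1) * (t ::ₘ s).esymmMean (r + 2)) =
      (r + 1) * (card s - (r + 1)) * (s.esymmMean r * s.esymmMean (r + 2)) -
        (r + 2) * (card s - r) * x ^ 2 := by
    rw [e₁, e₂]; ring
  have h₁ : 0 ≤ (r + 2) * (-x) * ((card s + 1) * (t ::ₘ s).esymmMean (r + 1)) := by
    have := neg_nonneg.2 hx; positivity
  have h₂ : 0 < (r + 1) * s.esymmMean r * ((card s + 1) * (t ::ₘ s).esymmMean (r + 2)) := by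
    positivity
  have h₃ := mul_le_mul_of_nonneg_left (esymmMean_mul_esymmMean_le_sq s r)
    (mul_nonneg (by positivity : (0 : ℝ) ≤ r + 1) hc)
  nlinarith [sq_nonneg x]

theorem esymmMean_pos_of_cons {k : ℕ} (hk : k ≤ card s + 1)
    (hpos : ∀ m, 1 ≤ m → m ≤ k → 0 < (t ::ₘ s).esymmMean m) : ∀ m < k, 0 < s.esymmMean m
  | 0, _ => by simp [esymmMean_zero]
  | r + 1, hr =>
    esymmMean_succ_pos_of_cons s t (by omega) (esymmMean_pos_of_cons hk hpos r (by omega))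
      (hpos (r + 1) (by omega) (by omega)) (hpos (r + 2) (by omega) (by omega))

theorem esymmMean_cons_step {r : ℕ} (hr : r + 2 ≤ card s) (ha₁ : 0 < s.esymmMean (r + 1))
    (ha₂ : 0 < s.esymmMean (r + 2)) (hb : 0 < (t ::ₘ s).esymmMean (r + 3)) :
    (r + 1) * s.esymmMean r * (t ::ₘ s).esymmMean (r + 3) <
      (r + 2) * s.esymmMean (r + 1) * (t ::ₘ s).esymmMean (r + 2) := by
  have e₂ : (card s + 1) * (t ::ₘ s).esymmMean (r + 2) =
      (card s - (r + 1)) * s.esymmMean (r + 2) + (r + 2) * t * s.esymmMean (r + 1) := by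
    have := esymmMean_cons_succ t s (r + 1)
    push_cast at this
    linear_combination this
  have e₃ : (card s + 1) * (t ::ₘ s).esymmMean (r + 3) =
      (card s - (r + 2)) * s.esymmMean (r + 3) + (r + 3) * t * s.esymmMean (r + 2) := by
    have := esymmMean_cons_succ t s (r + 2)
    push_cast at this
    linear_combination this
  set x₀ := s.esymmMean r
  set x₁ := s.esymmMean (r + 1)
  set x₂ := s.esymmMean (r + 2)
  set x₃ := s.esymmMean (r + 3)
  set N : ℝ := card s + 1
  set m : ℝ := r + 2
  have hN : 0 ≤ N - m - 1 := by
    have : (r : ℝ) + 2 ≤ card s := by exact_mod_cast hr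
    linarith
  have hm : 0 < m := by positivity
  -- `B` is the coefficient of `t` after the recurrences are substituted.
  set B := m ^ 2 * x₁ ^ 2 - (m ^ 2 - 1) * (x₀ * x₂)
  have key : (m + 1) * x₂ * (N * (m * x₁ * (t ::ₘ s).esymmMean (r + 2) -
        (m - 1) * x₀ * (t ::ₘ s).esymmMean (r + 3))) =
      m * x₁ * ((m + 1) * (N - m) * x₂ ^ 2 - m * (N - m - 1) * (x₁ * x₃)) +
        N * (t ::ₘ s).esymmMean (r + 3) * B := by
    linear_combination (m + 1) * x₂ * m * x₁ * e₂ + (-(m + 1) * (m - 1) * x₀ * x₂ - B) * e₃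
  have hbracket : 0 ≤ (m + 1) * (N - m) * x₂ ^ 2 - m * (N - m - 1) * (x₁ * x₃) := by
    have hnewton : x₁ * x₃ ≤ x₂ ^ 2 := esymmMean_mul_esymmMean_le_sq s (r + 1)
    nlinarith [mul_le_mul_of_nonneg_left hnewton (mul_nonneg hm.le hN), sq_nonneg x₂]
  have hB : 0 < B := by
    have hnewton : x₀ * x₂ ≤ x₁ ^ 2 := esymmMean_mul_esymmMean_le_sq s r
    have hm2 : 0 ≤ m ^ 2 - 1 := by nlinarith [show (2 : ℝ) ≤ m by simp [m]]
    nlinarith [mul_le_mul_of_nonneg_left hnewton hm2]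
  have hpos : 0 < (m + 1) * x₂ * (N * (m * x₁ * (t ::ₘ s).esymmMean (r + 2) -
        (m - 1) * x₀ * (t ::ₘ s).esymmMean (r + 3))) := by
    rw [key]
    have := mul_nonneg (mul_nonneg hm.le ha₁.le) hbracket
    have : 0 < N * (t ::ₘ s).esymmMean (r + 3) * B := by positivity
    linarith
  have hdiff := pos_of_mul_pos_right (pos_of_mul_pos_right hpos (by positivity)) (by positivity)
  rw [show (r : ℝ) + 1 = m - 1 by simp only [m]; ring]
  linarith

theorem sub_one_mul_esymmMean_cons_lt {i j k : ℕ} (hi : 1 ≤ i) (hij : i < j) (hjk : j ≤ k)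
    (hk : k ≤ card s + 1) (hpos : ∀ m, 1 ≤ m → m ≤ k → 0 < (t ::ₘ s).esymmMean m) :
    (i - 1) * (t ::ₘ s).esymmMean j * s.esymmMean (i - 2) <
      (j - 1) * s.esymmMean (j - 2) * (t ::ₘ s).esymmMean i := by
  have ha := esymmMean_pos_of_cons s t hk hpos
  set φ : ℕ → ℝ := fun m => ((m : ℝ) - 1) * s.esymmMean (m - 2) / (t ::ₘ s).esymmMean m
  have hmono : StrictMonoOn φ (Set.Icc 1 k) := by
    refine strictMonoOn_of_lt_add_one Set.ordConnected_Icc fun m _ ⟨hm, _⟩ ⟨_, hm₁⟩ => ?_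
    rcases (show m = 1 ∨ 2 ≤ m by omega) with rfl | hm₂
    · have := hpos 2 (by norm_num) hm₁
      norm_num [φ, esymmMean_zero]
      positivity
    obtain ⟨r, rfl⟩ := Nat.exists_eq_add_of_le' hm₂
    simp only [φ, Nat.add_sub_cancel, show r + 2 + 1 = r + 3 from rfl,
      show r + 3 - 2 = r + 1 from rfl]
    rw [div_lt_div_iff₀ (hpos _ (by omega) (by omega)) (hpos _ (by omega) (by omega))]
    push_cast
    have := esymmMean_cons_step s t (r := r) (by omega) (ha _ (by omega)) (ha _ (by omega))
      (hpos _ (by omega) hm₁)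
    linarith
  have := hmono ⟨hi, by omega⟩ ⟨by omega, hjk⟩ hij
  rw [div_lt_div_iff₀ (hpos i hi (by omega)) (hpos j (by omega) hjk)] at this
  linarith

end Cons

end Multiset

theorem hnorm_eq_esymmMean {m : ℕ} (x : Fin m → ℝ) (k : ℕ) :
    Hnorm m x k = (Finset.univ.val.map x).esymmMean k := by
  rw [Hnorm, esymmR, Multiset.esymmMean, Finset.esymm_map_val, Multiset.card_map, Finset.card_val,
    Finset.card_univ, Fintype.card_fin]

theorem map_univ_eq_cons_deleteCoord {m : ℕ} (x : Fin m → ℝ) (p : Fin m) :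
    Finset.univ.val.map x = x p ::ₘ Finset.univ.val.map (deleteCoord x p) := by
  cases m with
  | zero => exact p.elim0
  | succ m =>
    have hdel : deleteCoord x p = x ∘ p.succAbove := by
      funext i
      simp only [deleteCoord, Function.comp_apply, Fin.succAbove, Fin.lt_def, Fin.val_castSucc]
      split_ifs <;> rfl
    rw [hdel, Fin.univ_succAbove m p, Finset.cons_val, Finset.map_val, Multiset.map_cons,
      Multiset.map_map]
    rfl

theorem stmt_3_general (n : ℕ) (i j k : ℕ) (hi : 1 ≤ i) (hij : i < j) (hjk : j ≤ k)
    (hk : k ≤ n - 1) (lam : Fin (n - 1) → ℝ)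
    (hσ : ∀ m : ℕ, 1 ≤ m → m ≤ k → 0 < esymmR (n - 1) lam m) :
    ∀ p : Fin (n - 1),
      ((i : ℝ) - 1) * Hnorm (n - 1) lam j * Hnorm (n - 2) (deleteCoord lam p) (i - 2) <
        ((j : ℝ) - 1) * Hnorm (n - 2) (deleteCoord lam p) (j - 2) * Hnorm (n - 1) lam i := by
  intro p
  have hcons := map_univ_eq_cons_deleteCoord lam p
  simp only [hnorm_eq_esymmMean, hcons]
  refine Multiset.sub_one_mul_esymmMean_cons_lt _ _ hi hij hjk (by simp; omega) fun m hm hmk => ?_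
  rw [← hcons, ← hnorm_eq_esymmMean]
  exact div_pos (hσ m hm hmk) (by exact_mod_cast Nat.choose_pos (by omega))

/-- If `σ_m(λ) > 0` for `1 ≤ m ≤ k` and `1 ≤ i < j ≤ k`, then for every `p`,
`(j-1) H_{j-2}(Λ_p) H_i(λ) > (i-1) H_j(λ) H_{i-2}(Λ_p)`. -/
theorem stmt_3 (n : ℕ) (hn : 3 ≤ n) (i j k : ℕ) (hi : 1 ≤ i) (hij : i < j) (hjk : j ≤ k)
    (hk : k ≤ n - 1) (lam : Fin (n - 1) → ℝ)
    (hσ : ∀ m : ℕ, 1 ≤ m → m ≤ k → 0 < esymmR (n - 1) lam m) :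
    ∀ p : Fin (n - 1),
      ((i : ℝ) - 1) * Hnorm (n - 1) lam j * Hnorm (n - 2) (deleteCoord lam p) (i - 2) <
        ((j : ℝ) - 1) * Hnorm (n - 2) (deleteCoord lam p) (j - 2) * Hnorm (n - 1) lam i :=
  stmt_3_general n i j k hi hij hjk hk lam hσ
end

section
/- Let n ≥ 3 and 1 ≤ k ≤ (n−1)/2 be integers, let ε ∈ {−1, 0, 1}, and let h be a real symmetric (n−1)×(n−1) matrix with eigenvalues λ = (λ_1, …, λ_{n−1}) counted with multiplicity. For indices in {1, …, n−1} define R_{i_1 i_2}^{j_1 j_2} = (h_{i_1 j_1} h_{i_2 j_2} − h_{i_1 j_2} h_{i_2 j_1}) + ε (δ_{i_1 j_1} δ_{i_2 j_2} − δ_{i_1 j_2} δ_{i_2 j_1}), where δ is the ordinary Kronecker delta. Then (1/2^k) Σ δ^{i_1 i_2 ⋯ i_{2k}}_{j_1 j_2 ⋯ j_{2k}} · R_{i_1 i_2}^{j_1 j_2} ⋯ R_{i_{2k−1} i_{2k}}^{j_{2k−1} j_{2k}}, the sum running over all i_1, …, i_{2k}, j_1, …, j_{2k} ∈ {1, …,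 n−1}, equals C(n−1,2k) · (2k)! · Σ_{i=0}^{k} C(k,i) ε^i H_{2k−2i}(λ). -/
/-- The ordinary Kronecker delta on `Fin N`, as a real number. -/
def kdelta {N : ℕ} (i j : Fin N) : ℝ := if i = j then 1 else 0

/-- The generalized Kronecker delta `δ^{i_1 ⋯ i_r}_{j_1 ⋯ j_r}`: the determinant of the
`r × r` matrix whose `(a,b)`-entry is `1` if `i a = j b` and `0` otherwise. -/
noncomputable def genKron {N r : ℕ} (i j : Fin r → Fin N) : ℝ :=
  Matrix.det (Matrix.of fun a b : Fin r => kdelta (i a) (j b))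

open Finset Matrix Nat

theorem Matrix.det_mul_submatrix_eq_sum {R m n ι : Type*} [CommRing R] [Fintype m]
    [DecidableEq m] [Fintype ι] (A : Matrix n ι R) (B : Matrix ι n R) (u w : m → n) :
    ((A * B).submatrix u w).det
      = ∑ f : m → ι, (∏ a, A (u a) (f a)) * (B.submatrix f w).det := by
  have hrows : ((A * B).submatrix u w : m → m → R)
      = fun a => ∑ p, A (u a) p • fun b => B p (w b) := by
    ext a b
    simp [mul_apply, Finset.sum_apply]
  change detRowAlternating.toMultilinearMap _ = _
  rw [hrows, MultilinearMap.map_sum]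
  refine sum_congr rfl fun f _ => ?_
  rw [MultilinearMap.map_smul_univ]
  rfl

section GenKron

variable {N r : ℕ}

theorem genKron_eq_det_submatrix (i j : Fin r → Fin N) :
    genKron i j = ((1 : Matrix (Fin N) (Fin N) ℝ).submatrix i j).det :=
  rfl

theorem genKron_comp_perm (i j : Fin r → Fin N) (σ : Equiv.Perm (Fin r)) :
    genKron i (j ∘ σ) = Equiv.Perm.sign σ * genKron i j := by
  rw [genKron_eq_det_submatrix, genKron_eq_det_submatrix, ← det_permute']
  rfl

theorem genKron_self (u : Fin r → Fin N) :
    genKron u u = if Function.Injective u then 1 else 0 := by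
  split_ifs with hu
  · rw [genKron_eq_det_submatrix, submatrix_one u hu, det_one]
  · obtain ⟨a, b, hab, hne⟩ : ∃ a b, u a = u b ∧ a ≠ b := by
      simpa [Function.Injective] using hu
    exact det_zero_of_row_eq hne (by ext; simp [kdelta, hab])

theorem sum_genKron_mul_prod_mul_prod (P Q : Matrix (Fin N) (Fin N) ℝ) (u v : Fin r → Fin N) :
    ∑ i : Fin r → Fin N, ∑ j : Fin r → Fin N,
        genKron i j * ((∏ s, P (u s) (i s)) * ∏ s, Q (v s) (j s))
      = ((P * Qᵀ).submatrix u v).det := by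
  have hrows : ∀ j : Fin r → Fin N,
      ∑ i : Fin r → Fin N, (∏ s, P (u s) (i s)) * genKron i j = (P.submatrix u j).det := by
    intro j
    simp_rw [genKron_eq_det_submatrix]
    rw [← det_mul_submatrix_eq_sum, mul_one]
  calc _ = ∑ j : Fin r → Fin N, (∏ s, Q (v s) (j s)) * (Pᵀ.submatrix j u).det := by
        rw [sum_comm]
        refine sum_congr rfl fun j _ => ?_
        rw [← transpose_submatrix, det_transpose, ← hrows, mul_sum]
        exact sum_congr rfl fun i _ => by ring
    _ = _ := by
        rw [← det_mul_submatrix_eq_sum, ← det_transpose, transpose_submatrix,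
          transpose_mul, transpose_transpose]

theorem prod_conj_apply (O : Matrix (Fin N) (Fin N) ℝ) (A : Fin r → Matrix (Fin N) (Fin N) ℝ)
    (i j : Fin r → Fin N) :
    ∏ s, (Oᵀ * A s * O) (i s) (j s) = ∑ x : Fin r → Fin N, ∑ y : Fin r → Fin N,
      (∏ s, A s (x s) (y s)) * ((∏ s, O (x s) (i s)) * ∏ s, O (y s) (j s)) := by
  have hentry : ∀ s, (Oᵀ * A s * O) (i s) (j s)
      = ∑ x, ∑ y, A s x y * (O x (i s) * O y (j s)) := by
    intro s
    simp only [mul_apply, transpose_apply, sum_mul]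
    rw [sum_comm]
    exact sum_congr rfl fun _ _ => sum_congr rfl fun _ _ => by ring
  simp_rw [hentry, Fintype.prod_sum, prod_mul_distrib]

theorem sum_genKron_mul_prod_conj (O : Matrix (Fin N) (Fin N) ℝ) (hO : Oᵀ * O = 1)
    (A : Fin r → Matrix (Fin N) (Fin N) ℝ) :
    ∑ i : Fin r → Fin N, ∑ j : Fin r → Fin N,
        genKron i j * ∏ s, (Oᵀ * A s * O) (i s) (j s)
      = ∑ i : Fin r → Fin N, ∑ j : Fin r → Fin N, genKron i j * ∏ s, A s (i s) (j s) := by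
  have hO' : O * Oᵀ = 1 := mul_eq_one_comm.mp hO
  calc _ = ∑ x : Fin r → Fin N, ∑ y : Fin r → Fin N, (∏ s, A s (x s) (y s)) *
        ∑ i : Fin r → Fin N, ∑ j : Fin r → Fin N,
          genKron i j * ((∏ s, O (x s) (i s)) * ∏ s, O (y s) (j s)) := by
        simp_rw [prod_conj_apply, mul_sum, ← Fintype.sum_prod_type']
        exact Fintype.sum_equiv ((Equiv.prodAssoc _ _ _).symm.trans
          ((Equiv.prodComm _ _).trans (Equiv.prodAssoc _ _ _))) _ _ fun _ => by
            simp only [Equiv.trans_apply, Equiv.prodAssoc_symm_apply, Equiv.prodComm_apply,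
              Prod.swap_prod_mk, Equiv.prodAssoc_apply]
            ring
    _ = _ := by
        simp_rw [sum_genKron_mul_prod_mul_prod, hO', ← genKron_eq_det_submatrix, mul_comm]

theorem sum_genKron_mul_prod_diagonal (d : Fin r → Fin N → ℝ) :
    ∑ i : Fin r → Fin N, ∑ j : Fin r → Fin N,
        genKron i j * ∏ s, diagonal (d s) (i s) (j s)
      = ∑ u : Fin r → Fin N, genKron u u * ∏ s, d s (u s) := by
  refine sum_congr rfl fun i _ => ?_
  have hprod : ∀ j : Fin r → Fin N, ∏ s, diagonal (d s) (i s) (j s)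
      = if i = j then ∏ s, d s (i s) else 0 := by
    intro j
    split_ifs with hij
    · simp [hij]
    · obtain ⟨s, hs⟩ := Function.ne_iff.mp hij
      exact prod_eq_zero (mem_univ s) (diagonal_apply_ne _ hs)
  simp [hprod]

end GenKron

section Pairs

variable {k : ℕ}

def pairFst (a : Fin k) : Fin (2 * k) := ⟨2 * (a : ℕ), by omega⟩

def pairSnd (a : Fin k) : Fin (2 * k) := ⟨2 * (a : ℕ) + 1, by omega⟩

def pairIdx (s : Fin (2 * k)) : Fin k := ⟨(s : ℕ) / 2, by omega⟩

@[simp]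
theorem pairIdx_pairFst (a : Fin k) : pairIdx (pairFst a) = a := by
  ext; simp [pairIdx, pairFst]

@[simp]
theorem pairIdx_pairSnd (a : Fin k) : pairIdx (pairSnd a) = a := by
  ext; simp only [pairIdx, pairSnd]; omega

theorem pairFst_ne_pairSnd (a b : Fin k) : pairFst a ≠ pairSnd b := by
  simp only [pairFst, pairSnd, ne_eq, Fin.mk.injEq]; omega

theorem swap_pairFst_of_ne {a b : Fin k} (h : a ≠ b) :
    Equiv.swap (pairFst b) (pairSnd b) (pairFst a) = pairFst a :=
  Equiv.swap_apply_of_ne_of_ne (fun h' => h (by simpa using congrArg pairIdx h'))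
    (pairFst_ne_pairSnd a b)

theorem swap_pairSnd_of_ne {a b : Fin k} (h : a ≠ b) :
    Equiv.swap (pairFst b) (pairSnd b) (pairSnd a) = pairSnd a :=
  Equiv.swap_apply_of_ne_of_ne (pairFst_ne_pairSnd b a).symm
    (fun h' => h (by simpa using congrArg pairIdx h'))

@[to_additive]
theorem prod_pairs {M : Type*} [CommMonoid M] (f : Fin (2 * k) → M) :
    ∏ s, f s = ∏ a, f (pairFst a) * f (pairSnd a) := by
  let e : Fin k × Fin 2 ≃ Fin (2 * k) := finProdFinEquiv.trans (finCongr (Nat.mul_comm k 2))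
  have he0 : ∀ a, e (a, 0) = pairFst a := fun a => by ext; simp [e, pairFst, mul_comm]
  have he1 : ∀ a, e (a, 1) = pairSnd a := fun a => by ext; simp [e, pairSnd]; ring
  rw [← e.prod_comp, Fintype.prod_prod_type]
  simp [Fin.prod_univ_two, he0, he1]

theorem card_filter_pairIdx_mem (S : Finset (Fin k)) : #{s | pairIdx s ∈ S} = 2 * #S := by
  rw [card_filter, sum_pairs]
  simp [← two_mul, mul_comm]

end Pairs

section Antisymmetrization

variable {R : Type*} [CommRing R]

theorem sum_mul_sub_comp_swap {ι α : Type*} [Fintype ι] [DecidableEq ι] [Fintype α]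
    (p q : ι) (G Z W : (ι → α) → R) (hG : ∀ j, G (j ∘ Equiv.swap p q) = -G j)
    (hW : ∀ j, W (j ∘ Equiv.swap p q) = W j) :
    ∑ j, G j * ((Z j - Z (j ∘ Equiv.swap p q)) * W j) = 2 * ∑ j, G j * (Z j * W j) := by
  have hswap : ∑ j, G j * (Z (j ∘ Equiv.swap p q) * W j) = -∑ j, G j * (Z j * W j) := by
    let e : (ι → α) ≃ (ι → α) := (Equiv.swap p q).arrowCongr (Equiv.refl α)
    have he : ∀ j, e j = j ∘ Equiv.swap p q := fun j => by
      ext; simp [e, Equiv.arrowCongr_apply, Equiv.symm_swap]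
    rw [← e.sum_comp, ← sum_neg_distrib]
    refine sum_congr rfl fun j _ => ?_
    have hj : j ∘ Equiv.swap p q ∘ Equiv.swap p q = j := by ext; simp
    simp only [he, hG, hW, Function.comp_assoc, hj]
    ring
  simp only [sub_mul, mul_sub, sum_sub_distrib, hswap]
  ring

variable {k : ℕ} {α : Type*} [Fintype α]

theorem sum_mul_prod_sub_swap (G : (Fin (2 * k) → α) → R)
    (hG : ∀ a j, G (j ∘ Equiv.swap (pairFst a) (pairSnd a)) = -G j)
    (z : Fin k → α → α → R) :
    ∑ j, G j * ∏ a, (z a (j (pairFst a)) (j (pairSnd a)) - z a (j (pairSnd a)) (j (pairFst a)))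
      = 2 ^ k * ∑ j, G j * ∏ a, z a (j (pairFst a)) (j (pairSnd a)) := by
  let Z (a : Fin k) (j : Fin (2 * k) → α) : R := z a (j (pairFst a)) (j (pairSnd a))
  let F (B : Finset (Fin k)) (a : Fin k) (j : Fin (2 * k) → α) : R :=
    if a ∈ B then z a (j (pairFst a)) (j (pairSnd a)) - z a (j (pairSnd a)) (j (pairFst a))
    else Z a j
  suffices h : ∀ B, ∑ j, G j * ∏ a, F B a j = 2 ^ #B * ∑ j, G j * ∏ a, Z a j by
    simpa [F] using h univ
  intro B
  induction B using Finset.induction_on with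
  | empty => simp [F]
  | @insert b B hb ih =>
    let τ := Equiv.swap (pairFst b) (pairSnd b)
    let W (j : Fin (2 * k) → α) : R := ∏ a ∈ univ.erase b, F B a j
    have hW : ∀ j, W (j ∘ τ) = W j := fun j => prod_congr rfl fun a ha => by
      have hab := ne_of_mem_erase ha
      simp [F, Z, τ, swap_pairFst_of_ne hab, swap_pairSnd_of_ne hab]
    have hinsert : ∀ j, ∏ a, F (insert b B) a j = (Z b j - Z b (j ∘ τ)) * W j := fun j => by
      rw [← mul_prod_erase univ _ (mem_univ b)]
      congr 1
      · simp [F, Z, τ]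
      · exact prod_congr rfl fun a ha => by simp [F, ne_of_mem_erase ha]
    have hB : ∀ j, ∏ a, F B a j = Z b j * W j := fun j => by
      rw [← mul_prod_erase univ _ (mem_univ b)]
      simp [F, W, hb]
    calc ∑ j, G j * ∏ a, F (insert b B) a j
        = ∑ j, G j * ((Z b j - Z b (j ∘ τ)) * W j) := by simp only [hinsert]
      _ = 2 * ∑ j, G j * ∏ a, F B a j := by
        rw [sum_mul_sub_comp_swap _ _ G _ W (hG b) hW]
        simp only [hB]
      _ = _ := by rw [ih, card_insert_of_notMem hb, pow_succ]; ring

end Antisymmetrization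

section InjectiveTuples



variable {α R : Type*} [DecidableEq α] [CommSemiring R]

def injectiveTuples (s : Finset α) (r : ℕ) : Finset (Fin r → α) :=
  {u ∈ Fintype.piFinset fun _ => s | Function.Injective u}

theorem mem_injectiveTuples {s : Finset α} {r : ℕ} {u : Fin r → α} :
    u ∈ injectiveTuples s r ↔ (∀ x, u x ∈ s) ∧ Function.Injective u := by
  simp [injectiveTuples]

theorem sum_injectiveTuples_succ {M : Type*} [AddCommMonoid M] (s : Finset α) {r : ℕ}
    (F : (Fin (r + 1) → α) → M) :
    ∑ u ∈ injectiveTuples s (r + 1), F u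
      = ∑ a ∈ s, ∑ v ∈ injectiveTuples (s.erase a) r, F (Fin.cons a v) := by
  rw [sum_sigma']
  refine sum_nbij' (fun u => ⟨u 0, Fin.tail u⟩) (fun p => Fin.cons p.1 p.2) ?_ ?_ ?_ ?_ ?_
  · intro u hu
    rw [mem_injectiveTuples] at hu
    simp only [mem_sigma, mem_injectiveTuples, mem_erase]
    exact ⟨hu.1 0, fun x => ⟨fun h => Fin.succ_ne_zero x (hu.2 h), hu.1 _⟩,
      hu.2.comp (Fin.succ_injective r)⟩
  · rintro ⟨a, v⟩ hp
    simp only [mem_sigma, mem_injectiveTuples, mem_erase] at hp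
    rw [mem_injectiveTuples]
    refine ⟨Fin.cases hp.1 fun x => (hp.2.1 x).2, Fin.cons_injective_of_injective ?_ hp.2.2⟩
    rintro ⟨x, hx⟩
    exact (hp.2.1 x).1 hx
  · intro u _
    exact Fin.cons_self_tail u
  · rintro ⟨a, v⟩ _
    simp
  · intro u _
    simp

theorem sum_sum_powersetCard_erase (s : Finset α) (w : α → R) (m : ℕ) :
    ∑ a ∈ s, ∑ A ∈ (s.erase a).powersetCard m, ∏ x ∈ A, w x
      = (#s - m : ℕ) * ∑ A ∈ s.powersetCard m, ∏ x ∈ A, w x := by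
  rw [sum_comm' (t' := s.powersetCard m) (s' := fun A => s \ A), mul_sum]
  · refine sum_congr rfl fun A hA => ?_
    rw [sum_const, card_sdiff_of_subset (mem_powersetCard.mp hA).1,
      (mem_powersetCard.mp hA).2, nsmul_eq_mul]
  · intro a A
    simp only [mem_powersetCard, mem_sdiff, subset_erase]
    tauto

theorem sum_mul_sum_powersetCard_erase (s : Finset α) (w : α → R) (m : ℕ) :
    ∑ a ∈ s, w a * ∑ A ∈ (s.erase a).powersetCard m, ∏ x ∈ A, w x
      = (m + 1 : ℕ) * ∑ B ∈ s.powersetCard (m + 1), ∏ x ∈ B, w x := by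
  have hinsert : ∀ a ∈ s, w a * ∑ A ∈ (s.erase a).powersetCard m, ∏ x ∈ A, w x
      = ∑ B ∈ s.powersetCard (m + 1) with a ∈ B, ∏ x ∈ B, w x := by
    intro a ha
    have hnot : ∀ A ∈ (s.erase a).powersetCard m, a ∉ A := fun A hA h => by
      simpa using (mem_powersetCard.mp hA).1 h
    rw [mul_sum]
    refine sum_nbij' (insert a) (fun B => B.erase a) ?_ ?_ ?_ ?_ ?_
    · intro A hA
      have haA := hnot A hA
      simp only [mem_powersetCard, subset_erase] at hA
      simp only [mem_filter, mem_powersetCard, mem_insert_self, and_true]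
      exact ⟨insert_subset ha hA.1.1, by rw [card_insert_of_notMem haA, hA.2]⟩
    · intro B hB
      simp only [mem_filter, mem_powersetCard] at hB
      simp only [mem_powersetCard, card_erase_of_mem hB.2, hB.1.2]
      exact ⟨erase_subset_erase a hB.1.1, rfl⟩
    · intro A hA
      exact erase_insert (hnot A hA)
    · intro B hB
      exact insert_erase (mem_filter.mp hB).2
    · intro A hA
      rw [prod_insert (hnot A hA)]
  rw [sum_congr rfl hinsert, sum_comm' (t' := s.powersetCard (m + 1))
    (s' := fun B => B), mul_sum]
  · refine sum_congr rfl fun B hB => ?_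
    rw [sum_const, (mem_powersetCard.mp hB).2, nsmul_eq_mul]
  · intro a B
    simp only [mem_filter, mem_powersetCard]
    constructor
    · rintro ⟨ha, ⟨hB, hcard⟩, haB⟩
      exact ⟨haB, hB, hcard⟩
    · rintro ⟨haB, hB, hcard⟩
      exact ⟨hB haB, ⟨hB, hcard⟩, haB⟩

theorem sum_injectiveTuples_prod (s : Finset α) (w : α → R) {r : ℕ} (T : Finset (Fin r)) :
    ∑ u ∈ injectiveTuples s r, ∏ x ∈ T, w (u x)
      = (#T)! * (#s - #T).descFactorial (r - #T)
          * ∑ A ∈ s.powersetCard #T, ∏ x ∈ A, w x := by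
  induction r generalizing s with
  | zero =>
    obtain rfl : T = ∅ := eq_empty_of_isEmpty T
    simp [injectiveTuples, Function.injective_of_subsingleton]
  | succ r ih =>
    let T' : Finset (Fin r) := {y | y.succ ∈ T}
    have hprod : ∀ a (v : Fin r → α),
        ∏ x ∈ T, w (Fin.cons a v x : α)
          = (if 0 ∈ T then w a else 1) * ∏ y ∈ T', w (v y) := by
      intro a v
      rw [← Fintype.prod_extend_by_one, ← Fintype.prod_extend_by_one, Fin.prod_univ_succ]
      simp [T', prod_filter]
    have hcard : #T = if 0 ∈ T then #T' + 1 else #T' := by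
      simpa using Fin.card_filter_univ_succ (· ∈ T)
    have hT' : #T' ≤ r := by simpa using card_le_univ T'
    rw [sum_injectiveTuples_succ]
    simp_rw [hprod, ← mul_sum]
    rw [sum_congr rfl fun a ha => by rw [ih, card_erase_of_mem ha]]
    split_ifs at hcard with h0
    · simp_rw [if_pos h0, mul_left_comm (w _), ← mul_sum, sum_mul_sum_powersetCard_erase,
        hcard, Nat.factorial_succ, show #s - (#T' + 1) = #s - 1 - #T' by omega,
        show r + 1 - (#T' + 1) = r - #T' by omega]
      push_cast
      ring
    · have hdesc : (#s - #T').descFactorial (r + 1 - #T')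
          = (#s - #T') * (#s - 1 - #T').descFactorial (r - #T') := by
        rw [show r + 1 - #T' = r - #T' + 1 by omega, show #s - 1 - #T' = #s - #T' - 1 by omega]
        cases #s - #T' with
        | zero => simp
        | succ c => rw [Nat.succ_descFactorial_succ, Nat.add_sub_cancel]
      simp_rw [if_neg h0, one_mul, ← mul_sum, sum_sum_powersetCard_erase, hcard, hdesc]
      push_cast
      ring

end InjectiveTuples

theorem kdelta_eq_one {N : ℕ} : kdelta = (1 : Matrix (Fin N) (Fin N) ℝ) := by
  ext i j
  simp [kdelta, one_apply]

theorem Hnorm_mul_choose (m : ℕ) (x : Fin m → ℝ) (p : ℕ) :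
    Hnorm m x p * m.choose p = esymmR m x p := by
  rcases le_or_gt p m with hp | hp
  · exact div_mul_cancel₀ _ (by exact_mod_cast (Nat.choose_pos hp).ne')
  · simp [Hnorm, esymmR, Nat.choose_eq_zero_of_lt hp, powersetCard_eq_empty.mpr, hp]

theorem factorial_mul_descFactorial_mul_choose {N p r : ℕ} (hpr : p ≤ r) :
    p ! * (N - p).descFactorial (r - p) * N.choose p = r ! * N.choose r := by
  rw [← Nat.descFactorial_eq_factorial_mul_choose, ← Nat.descFactorial_mul_descFactorial hpr,
    Nat.descFactorial_eq_factorial_mul_choose N p]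
  ring

theorem sum_genKron_self_mul_prod {N r : ℕ} (w : Fin N → ℝ) (T : Finset (Fin r)) :
    ∑ u : Fin r → Fin N, genKron u u * ∏ s ∈ T, w (u s)
      = (#T)! * (N - #T).descFactorial (r - #T) * esymmR N w #T := by
  have h := sum_injectiveTuples_prod univ w T
  simp only [injectiveTuples, Fintype.piFinset_univ, sum_filter, Finset.card_univ,
    Fintype.card_fin] at h
  simp [genKron_self, ite_mul, h, esymmR]

section Gauss

variable {N k : ℕ}

theorem prod_pairs_add (A B : Matrix (Fin N) (Fin N) ℝ) (c : ℝ) (i j : Fin (2 * k) → Fin N) :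
    ∏ a, (A (i (pairFst a)) (j (pairFst a)) * A (i (pairSnd a)) (j (pairSnd a))
        + c * (B (i (pairFst a)) (j (pairFst a)) * B (i (pairSnd a)) (j (pairSnd a))))
      = ∑ S : Finset (Fin k), c ^ (k - #S) *
          ∏ s, (if pairIdx s ∈ S then A else B) (i s) (j s) := by
  rw [Fintype.prod_add]
  refine sum_congr rfl fun S _ => ?_
  have hpair : ∀ a, (if a ∈ S then A else B) (i (pairFst a)) (j (pairFst a))
      * (if a ∈ S then A else B) (i (pairSnd a)) (j (pairSnd a))
      = if a ∈ S then A (i (pairFst a)) (j (pairFst a)) * A (i (pairSnd a)) (j (pairSnd a))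
        else B (i (pairFst a)) (j (pairFst a)) * B (i (pairSnd a)) (j (pairSnd a)) := fun a => by
    split_ifs <;> rfl
  rw [prod_pairs]
  simp only [pairIdx_pairFst, pairIdx_pairSnd, hpair, prod_ite, prod_mul_distrib,
    prod_const, filter_mem_eq_inter, univ_inter, filter_not,
    card_compl, Fintype.card_fin, ← compl_eq_univ_sdiff]
  ring

theorem sum_genKron_mul_prod_gauss (A B : Matrix (Fin N) (Fin N) ℝ) (c : ℝ) :
    ∑ i : Fin (2 * k) → Fin N, ∑ j : Fin (2 * k) → Fin N, genKron i j * ∏ a,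
      ((A (i (pairFst a)) (j (pairFst a)) * A (i (pairSnd a)) (j (pairSnd a))
          - A (i (pairFst a)) (j (pairSnd a)) * A (i (pairSnd a)) (j (pairFst a)))
        + c * (B (i (pairFst a)) (j (pairFst a)) * B (i (pairSnd a)) (j (pairSnd a))
          - B (i (pairFst a)) (j (pairSnd a)) * B (i (pairSnd a)) (j (pairFst a))))
      = 2 ^ k * ∑ S : Finset (Fin k), c ^ (k - #S) *
          ∑ i : Fin (2 * k) → Fin N, ∑ j : Fin (2 * k) → Fin N,
            genKron i j * ∏ s, (if pairIdx s ∈ S then A else B) (i s) (j s) := by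
  have hanti : ∀ i : Fin (2 * k) → Fin N, ∀ a j,
      genKron i (j ∘ Equiv.swap (pairFst a) (pairSnd a)) = -genKron i j := fun i a j => by
    rw [genKron_comp_perm, Equiv.Perm.sign_swap (pairFst_ne_pairSnd a a)]
    simp
  calc _ = ∑ i : Fin (2 * k) → Fin N, 2 ^ k *
        ∑ j : Fin (2 * k) → Fin N, genKron i j * ∏ a,
        (A (i (pairFst a)) (j (pairFst a)) * A (i (pairSnd a)) (j (pairSnd a))
          + c * (B (i (pairFst a)) (j (pairFst a)) * B (i (pairSnd a)) (j (pairSnd a)))) := by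
        refine sum_congr rfl fun i _ => ?_
        rw [← sum_mul_prod_sub_swap (genKron i) (hanti i) fun a x y =>
          A (i (pairFst a)) x * A (i (pairSnd a)) y
            + c * (B (i (pairFst a)) x * B (i (pairSnd a)) y)]
        exact sum_congr rfl fun j _ => congrArg _ <| prod_congr rfl fun a _ => by ring
    _ = _ := by
        simp_rw [prod_pairs_add, mul_sum, ← Fintype.sum_prod_type']
        exact Fintype.sum_equiv ((Equiv.prodAssoc _ _ _).symm.trans (Equiv.prodComm _ _)) _ _
          fun _ => by
            simp only [Equiv.trans_apply, Equiv.prodAssoc_symm_apply, Equiv.prodComm_apply,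
              Prod.swap_prod_mk]
            ring

theorem sum_genKron_mul_prod_ite_conj (O : Matrix (Fin N) (Fin N) ℝ) (hO : Oᵀ * O = 1)
    (lam : Fin N → ℝ) (S : Finset (Fin k)) :
    ∑ i : Fin (2 * k) → Fin N, ∑ j : Fin (2 * k) → Fin N, genKron i j *
        ∏ s, (if pairIdx s ∈ S then Oᵀ * diagonal lam * O else 1) (i s) (j s)
      = (2 * #S)! * (N - 2 * #S).descFactorial (2 * k - 2 * #S) * esymmR N lam (2 * #S) := by
  have hconj : ∀ s : Fin (2 * k), (if pairIdx s ∈ S then Oᵀ * diagonal lam * O else 1)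
      = Oᵀ * diagonal (if pairIdx s ∈ S then lam else fun _ => 1) * O := fun s => by
    split_ifs <;> simp [hO]
  have hdiag : ∀ u : Fin (2 * k) → Fin N,
      ∏ s, (if pairIdx s ∈ S then lam else fun _ => 1) (u s)
        = ∏ s ∈ {s | pairIdx s ∈ S}, lam (u s) :=
    fun u => by
      rw [prod_filter]
      exact prod_congr rfl fun s _ => by split_ifs <;> rfl
  simp_rw [hconj, sum_genKron_mul_prod_conj O hO, sum_genKron_mul_prod_diagonal, hdiag,
    sum_genKron_self_mul_prod, card_filter_pairIdx_mem]

theorem sum_powerset_eq_sum_choose_Hnorm (c : ℝ) (x : Fin N → ℝ) :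
    ∑ S : Finset (Fin k), c ^ (k - #S) *
        ((2 * #S)! * (N - 2 * #S).descFactorial (2 * k - 2 * #S) * esymmR N x (2 * #S))
      = N.choose (2 * k) * (2 * k)! *
          ∑ i ∈ range (k + 1), k.choose i * c ^ i * Hnorm N x (2 * k - 2 * i) := by
  rw [← powerset_univ, sum_powerset_apply_card (fun m => c ^ (k - m) *
      ((2 * m)! * (N - 2 * m).descFactorial (2 * k - 2 * m) * esymmR N x (2 * m))),
    Finset.card_univ, Fintype.card_fin]
  conv_rhs => rw [mul_sum, ← sum_range_reflect]
  refine sum_congr rfl fun m hm => ?_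
  have hmk : m ≤ k := Nat.lt_succ_iff.mp (mem_range.mp hm)
  have hfact : ((2 * m)! * (N - 2 * m).descFactorial (2 * k - 2 * m) * N.choose (2 * m) : ℝ)
      = (2 * k)! * N.choose (2 * k) := by
    exact_mod_cast factorial_mul_descFactorial_mul_choose (by omega)
  rw [show k + 1 - 1 - m = k - m by omega, show 2 * k - 2 * (k - m) = 2 * m by omega,
    Nat.choose_symm hmk, ← Hnorm_mul_choose, nsmul_eq_mul]
  linear_combination (k.choose m * c ^ (k - m) * Hnorm N x (2 * m)) * hfact

end Gauss

/-- **Gauss-Bonnet curvature of a hypersurface in a space form** (Lemma 4.1):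
if `h` is a real symmetric matrix with eigenvalues `λ` (counted with multiplicity) and
`R_{i₁i₂}^{j₁j₂}` is built from `h` via the Gauss equation with ambient curvature `ε`, then
`L_k = (1/2^k) δ^{i…}_{j…} R⋯R = C(n-1,2k) (2k)! Σ_{i=0}^k C(k,i) ε^i H_{2k-2i}(λ)`. -/
theorem stmt_8 (n : ℕ) (k : ℕ)
    (eps : ℝ)
    (h : Matrix (Fin (n - 1)) (Fin (n - 1)) ℝ) (lam : Fin (n - 1) → ℝ)
    (O : Matrix (Fin (n - 1)) (Fin (n - 1)) ℝ)
    (hO : Matrix.transpose O * O = 1)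
    (hdiag : h = Matrix.transpose O * Matrix.diagonal lam * O) :
    (1 / 2 ^ k : ℝ) *
      ∑ i : Fin (2 * k) → Fin (n - 1), ∑ j : Fin (2 * k) → Fin (n - 1),
        genKron i j *
          ∏ a : Fin k,
            (fun i₁ i₂ j₁ j₂ =>
                (h i₁ j₁ * h i₂ j₂ - h i₁ j₂ * h i₂ j₁) +
                  eps * (kdelta i₁ j₁ * kdelta i₂ j₂ - kdelta i₁ j₂ * kdelta i₂ j₁))
              (i ⟨2 * (a : ℕ), by have := a.isLt; omega⟩)
              (i ⟨2 * (a : ℕ) + 1, by have := a.isLt; omega⟩)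
              (j ⟨2 * (a : ℕ), by have := a.isLt; omega⟩)
              (j ⟨2 * (a : ℕ) + 1, by have := a.isLt; omega⟩)
      = ((n - 1).choose (2 * k) : ℝ) * ((2 * k).factorial : ℝ) *
          ∑ i ∈ Finset.range (k + 1),
            (k.choose i : ℝ) * eps ^ i * Hnorm (n - 1) lam (2 * k - 2 * i) := by
  subst hdiag
  -- `pairFst a`, `pairSnd a` are the statement's slots `⟨2 * a, _⟩`, `⟨2 * a + 1, _⟩`.
  calc _ = (1 / 2 ^ k : ℝ) * (2 ^ k * ∑ S : Finset (Fin k), eps ^ (k - #S) *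
        ∑ i : Fin (2 * k) → Fin (n - 1), ∑ j : Fin (2 * k) → Fin (n - 1), genKron i j *
          ∏ s, (if pairIdx s ∈ S then Oᵀ * diagonal lam * O else kdelta) (i s) (j s)) :=
        congrArg _ (sum_genKron_mul_prod_gauss _ kdelta eps)
    _ = ∑ S : Finset (Fin k), eps ^ (k - #S) * ((2 * #S)! *
        (n - 1 - 2 * #S).descFactorial (2 * k - 2 * #S) * esymmR (n - 1) lam (2 * #S)) := by
        rw [one_div, inv_mul_cancel_left₀ (by positivity), kdelta_eq_one]
        simp_rw [sum_genKron_mul_prod_ite_conj O hO]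
    _ = _ := sum_powerset_eq_sum_choose_Hnorm eps lam
end
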